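/- arXiv:1812.02800 — 6 statements merged into one kernel-verified Lean document; each statement's English description precedes it below -/
import Mathlib

section
/- Let x : ℕ → (Fin n → ℝ) be p-periodic (x(t+p) = x(t) for all t), with n, p positive and coprime. Define y(t) = x(t)(t mod n). Then x is uniquely determined by y: if x and x' are both p-periodic and induce the same y, then x = x'. -/
theorem stmt1 (n p : ℕ) (hn : 0 < n) (hp : 0 < p) (h : Nat.Coprime n p)
    (x x' : ℕ → Fin n → ℝ)
    (hx : ∀ t, x (t + p) = x t) (hx' : ∀ t, x' (t + p) = x' t)
    (hy : ∀ t, x t ⟨t % n, Nat.mod_lt t hn⟩ = x' t ⟨t % n, Nat.mod_lt t hn⟩) :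
    x = x' := by
  have key : ∀ (f : ℕ → Fin n → ℝ), (∀ t, f (t + p) = f t) →
      ∀ k t, f (t + k * p) = f t := by
    intro f hf k
    induction k with
    | zero => simp
    | succ k ih =>
      intro t
      rw [Nat.succ_mul, ← Nat.add_assoc, hf, ih]
  funext t i
  obtain ⟨z, hz1, hz2⟩ := Nat.chineseRemainder h i.val t
  set s := z + n * p * (t + 1) with hs
  have hzs : z ≡ s [MOD n * p] :=
    (Nat.modEq_iff_dvd' (Nat.le_add_right _ _)).mpr ⟨t + 1, by omega⟩
  have hsn : s % n = i.val := by
    have h1 : s ≡ i.val [MOD n] :=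
      ((hzs.of_mul_right p).symm.trans hz1)
    rw [Nat.ModEq, Nat.mod_eq_of_lt i.isLt] at h1
    exact h1
  have hsp : s ≡ t [MOD p] := (hzs.of_mul_left n).symm.trans hz2
  have hst : t ≤ s := by
    have : t + 1 ≤ n * p * (t + 1) :=
      Nat.le_mul_of_pos_left _ (Nat.mul_pos hn hp)
    omega
  obtain ⟨k, hk⟩ := (Nat.modEq_iff_dvd' hst).mp hsp.symm
  have hsk : s = t + p * k := by omega
  have hfin : (⟨s % n, Nat.mod_lt s hn⟩ : Fin n) = i := Fin.ext hsn
  have e1 : x t i = x s i := by rw [hsk, Nat.mul_comm, key x hx]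
  have e2 : x' t i = x' s i := by rw [hsk, Nat.mul_comm, key x' hx']
  rw [e1, e2, ← hfin, hy s]
end

section
/- Let c : ℕ → (Fin n → ℝ) be m-periodic with m ≥ n, such that any n vectors among c(0),…,c(m-1) are linearly independent (span ℝⁿ). Let x : ℕ → (Fin n → ℝ) be p-periodic and define y(t) = ⟨c(t), x(t)⟩ (inner product). If m ≥ n * gcd(m,p), then x is uniquely determined by y among p-periodic signals. -/
private lemma per_mod {X : Type*} (m : ℕ) (hm : 0 < m) (f : ℕ → X)
    (hf : ∀ t, f (t + m) = f t) : ∀ a, f a = f (a % m) := by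
  intro a
  induction a using Nat.strong_induction_on with
  | _ a ih =>
    rcases lt_or_ge a m with h | h
    · rw [Nat.mod_eq_of_lt h]
    · have h1 : a - m + m = a := by omega
      have h2 := hf (a - m)
      rw [h1] at h2
      rw [h2, ih (a - m) (by omega), ← Nat.mod_eq_sub_mod h]

theorem stmt4 (n m p : ℕ) (hn : 0 < n) (hm : 0 < m) (hp : 0 < p) (hmn : n ≤ m)
    (c : ℕ → Fin n → ℝ) (hc : ∀ t, c (t + m) = c t)
    (hrich : ∀ T : Finset (Fin m), T.card = n →
      Submodule.span ℝ ((fun t : Fin m => c t) '' (T : Set (Fin m))) = ⊤)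
    (hgcd : n * Nat.gcd m p ≤ m)
    (x x' : ℕ → Fin n → ℝ) (hx : ∀ t, x (t + p) = x t) (hx' : ∀ t, x' (t + p) = x' t)
    (hy : ∀ t, ∑ i, c t i * x t i = ∑ i, c t i * x' t i) :
    x = x' := by
  set d := Nat.gcd m p with hd
  have hdpos : 0 < d := Nat.gcd_pos_of_pos_left p hm
  funext t₀
  set v : Fin n → ℝ := fun i => x t₀ i - x' t₀ i with hv
  suffices hv0 : v = 0 by
    funext i
    have := congrFun hv0 i
    simp [hv] at this
    linarith
  -- the injection j ↦ t₀ % d + j * d into Fin m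
  have hbound : ∀ j : Fin n, t₀ % d + (j : ℕ) * d < m := by
    intro j
    have h1 : t₀ % d < d := Nat.mod_lt _ hdpos
    have h2 : (j : ℕ) + 1 ≤ n := j.2
    calc t₀ % d + (j : ℕ) * d < ((j : ℕ) + 1) * d := by
          rw [add_mul, one_mul]; omega
      _ ≤ n * d := Nat.mul_le_mul_right d h2
      _ ≤ m := hgcd
  set g : Fin n → Fin m := fun j => ⟨t₀ % d + (j : ℕ) * d, hbound j⟩ with hg
  have hginj : Function.Injective g := by
    intro a b hab
    have : t₀ % d + (a : ℕ) * d = t₀ % d + (b : ℕ) * d := congrArg Fin.val hab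
    have : (a : ℕ) = (b : ℕ) := by
      have := Nat.eq_of_mul_eq_mul_right hdpos (by omega : (a : ℕ) * d = (b : ℕ) * d)
      exact this
    exact Fin.ext this
  set T : Finset (Fin m) := Finset.image g Finset.univ with hT
  have hTcard : T.card = n := by
    rw [hT, Finset.card_image_of_injective _ hginj, Finset.card_univ, Fintype.card_fin]
  -- key: for every s ∈ T, ∑ i, c s i * v i = 0
  have hkey : ∀ s ∈ T, ∑ i, c (s : ℕ) i * v i = 0 := by
    intro s hs
    rw [hT, Finset.mem_image] at hs
    obtain ⟨j, -, rfl⟩ := hs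
    -- s = t₀ % d + j * d ≡ t₀ [MOD d]
    have hmod : (t₀ % d + (j : ℕ) * d) ≡ t₀ [MOD d] := by
      unfold Nat.ModEq
      rw [Nat.add_mul_mod_self_right, Nat.mod_mod_of_dvd _ dvd_rfl]
    obtain ⟨k, hk1, hk2⟩ := Nat.chineseRemainder' (a := t₀ % d + (j : ℕ) * d) (b := t₀)
      (n := m) (m := p) hmod
    have hck : c k = c (t₀ % d + (j : ℕ) * d) := by
      rw [per_mod m hm c hc k, per_mod m hm c hc (t₀ % d + (j : ℕ) * d)]
      exact congrArg c hk1
    have hxk : x k = x t₀ := by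
      rw [per_mod p hp x hx k, per_mod p hp x hx t₀]
      exact congrArg x hk2
    have hxk' : x' k = x' t₀ := by
      rw [per_mod p hp x' hx' k, per_mod p hp x' hx' t₀]
      exact congrArg x' hk2
    have := hy k
    rw [hck, hxk, hxk'] at this
    have : ∑ i, c (t₀ % d + (j : ℕ) * d) i * v i
        = ∑ i, c (t₀ % d + (j : ℕ) * d) i * x t₀ i
          - ∑ i, c (t₀ % d + (j : ℕ) * d) i * x' t₀ i := by
      rw [← Finset.sum_sub_distrib]
      congr 1; funext i; simp [hv]; ring
    rw [this]
    have h2 := hy k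
    rw [hck, hxk, hxk'] at h2
    rw [h2]; ring
  -- linear functional w ↦ ∑ i, w i * v i
  let φ : (Fin n → ℝ) →ₗ[ℝ] ℝ :=
    { toFun := fun w => ∑ i, w i * v i
      map_add' := by intros a b; simp [add_mul, Finset.sum_add_distrib]
      map_smul' := by
        intros a w
        simp only [Pi.smul_apply, smul_eq_mul, RingHom.id_apply, Finset.mul_sum]
        congr 1; funext i; ring }
  have hspan := hrich T hTcard
  have hsub : ((fun t : Fin m => c t) '' (T : Set (Fin m))) ⊆ (LinearMap.ker φ : Set (Fin n → ℝ)) := by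
    rintro w ⟨s, hs, rfl⟩
    simp only [SetLike.mem_coe, LinearMap.mem_ker]
    exact hkey s hs
  have : Submodule.span ℝ ((fun t : Fin m => c t) '' (T : Set (Fin m))) ≤ LinearMap.ker φ :=
    Submodule.span_le.mpr hsub
  rw [hspan, top_le_iff] at this
  have hφv : φ v = 0 := by
    have : v ∈ LinearMap.ker φ := this ▸ Submodule.mem_top
    exact LinearMap.mem_ker.mp this
  have hsum : ∑ i, v i * v i = 0 := hφv
  funext i
  have hnn : ∀ i ∈ Finset.univ, (0:ℝ) ≤ v i * v i := fun i _ => mul_self_nonneg _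
  have := (Finset.sum_eq_zero_iff_of_nonneg hnn).mp hsum i (Finset.mem_univ i)
  exact mul_self_eq_zero.mp this
end

section
/- Let c : ℕ → (Fin n → ℝ) be m-periodic such that any n vectors among c(0),…,c(m-1) span ℝⁿ, and suppose m < n * gcd(m,p) with gcd(m,p) > 1. Then there exist two distinct p-periodic signals x, x' : ℕ → (Fin n → ℝ) inducing the same compressed signal y(t) = ⟨c(t), x(t)⟩, i.e., the compression is not lossless. -/
/-!
Proof idea: put `d = gcd m p`. A signal supported on the multiples of `d` is `p`-periodic since
`d ∣ p`, and at those times the sensing vectors `c t` take only the `m / d < n` values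
`c 0, c d, …, c (m - d)` by `m`-periodicity. Fewer than `n` linear constraints on a vector of `ℝⁿ`
leave a nonzero solution `v`; the signal equal to `v` at multiples of `d` and `0` elsewhere is then
compressed to the same output as the zero signal.
-/

open Matrix

theorem exists_ne_zero_forall_dotProduct_eq_zero {K ι κ : Type*} [Field K] [Fintype ι]
    [Fintype κ] (w : κ → ι → K) (h : Fintype.card κ < Fintype.card ι) :
    ∃ v : ι → K, v ≠ 0 ∧ ∀ k, w k ⬝ᵥ v = 0 := by
  have hker : LinearMap.ker (Matrix.of w).mulVecLin ≠ ⊥ :=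
    LinearMap.ker_ne_bot_of_finrank_lt (by simpa using h)
  obtain ⟨v, hv, hv0⟩ := Submodule.exists_mem_ne_zero_of_ne_bot hker
  exact ⟨v, hv0, fun k => congrFun (LinearMap.mem_ker.mp hv) k⟩

theorem Function.Periodic.exists_ne_zero_forall_dvd_dotProduct_eq_zero {K ι : Type*} [Field K]
    [Fintype ι] {m d : ℕ} {c : ℕ → ι → K} (hc : Function.Periodic c m) (hm : 0 < m)
    (hdm : d ∣ m) (hmd : m < Fintype.card ι * d) :
    ∃ v : ι → K, v ≠ 0 ∧ ∀ t, d ∣ t → c t ⬝ᵥ v = 0 := by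
  have hqd : m / d * d = m := Nat.div_mul_cancel hdm
  have hq : m / d < Fintype.card ι := Nat.lt_of_mul_lt_mul_right (hqd ▸ hmd)
  obtain ⟨v, hv0, hv⟩ := exists_ne_zero_forall_dotProduct_eq_zero
    (fun k : Fin (m / d) => c (k * d)) (by simpa using hq)
  refine ⟨v, hv0, fun t ht => ?_⟩
  have hk : t % m / d < m / d := Nat.div_lt_div_of_lt_of_dvd hdm (Nat.mod_lt t hm)
  have hct : c t = c (t % m / d * d) := by
    rw [Nat.div_mul_cancel ((Nat.dvd_mod_iff hdm).mpr ht), hc.map_mod_nat]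
  exact hct ▸ hv ⟨_, hk⟩

theorem stmt5_general (n m p : ℕ) (hm : 0 < m)
    (c : ℕ → Fin n → ℝ) (hc : ∀ t, c (t + m) = c t)
    (hgcd : m < n * Nat.gcd m p) :
    ∃ x x' : ℕ → Fin n → ℝ,
      (∀ t, x (t + p) = x t) ∧ (∀ t, x' (t + p) = x' t) ∧ x ≠ x' ∧
      ∀ t, ∑ i, c t i * x t i = ∑ i, c t i * x' t i := by
  obtain ⟨v, hv0, hv⟩ := Function.Periodic.exists_ne_zero_forall_dvd_dotProduct_eq_zero
    (K := ℝ) hc hm (Nat.gcd_dvd_left m p) (by simpa using hgcd)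
  refine ⟨fun t => if Nat.gcd m p ∣ t then v else 0, 0, fun t => ?_, fun _ => rfl,
    fun h => hv0 (by simpa using congrFun h 0), fun t => ?_⟩
  · simp only [Nat.dvd_add_left (Nat.gcd_dvd_right m p)]
  · by_cases ht : Nat.gcd m p ∣ t
    · simpa [ht, dotProduct] using hv t ht
    · simp [ht]

theorem stmt5 (n m p : ℕ) (hn : 0 < n) (hm : 0 < m) (hp : 0 < p) (hmn : n ≤ m)
    (c : ℕ → Fin n → ℝ) (hc : ∀ t, c (t + m) = c t)
    (hrich : ∀ T : Finset (Fin m), T.card = n →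
      Submodule.span ℝ ((fun t : Fin m => c t) '' (T : Set (Fin m))) = ⊤)
    (hgcd : m < n * Nat.gcd m p) (hd : 1 < Nat.gcd m p) :
    ∃ x x' : ℕ → Fin n → ℝ,
      (∀ t, x (t + p) = x t) ∧ (∀ t, x' (t + p) = x' t) ∧ x ≠ x' ∧
      ∀ t, ∑ i, c t i * x t i = ∑ i, c t i * x' t i :=
  stmt5_general n m p hm c hc hgcd
end

section
/- Let σ be a permutation of Fin n and let x : ℕ → (Fin n → ℝ) evolve by x(t+1)(i) = x(t)(σ(i)). Define y(t) = x(t)(t mod n). Then x is uniquely determined by y if and only if the map (i,j) ↦ σ^(i*n + j)(j) from ℕ × Fin n to Fin n is surjective. -/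
theorem stmt6 (n : ℕ) (hn : 0 < n) (σ : Equiv.Perm (Fin n)) :
    (∀ x x' : ℕ → Fin n → ℝ,
      (∀ t i, x (t + 1) i = x t (σ i)) → (∀ t i, x' (t + 1) i = x' t (σ i)) →
      (∀ t, x t ⟨t % n, Nat.mod_lt t hn⟩ = x' t ⟨t % n, Nat.mod_lt t hn⟩) →
      x = x') ↔
    Function.Surjective
      (fun ij : ℕ × Fin n => (σ ^ (ij.1 * n + (ij.2 : ℕ))) ij.2) := by
  constructor
  · intro h
    by_contra hs
    unfold Function.Surjective at hs
    push_neg at hs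
    obtain ⟨k, hk⟩ := hs
    set x : ℕ → Fin n → ℝ := fun t i => if (σ ^ t) i = k then 1 else 0 with hx
    have hdyn : ∀ t i, x (t + 1) i = x t (σ i) := by
      intro t i
      simp only [hx, pow_succ, Equiv.Perm.mul_apply]
    have hy : ∀ t, x t ⟨t % n, Nat.mod_lt t hn⟩ = (0 : ℝ) := by
      intro t
      simp only [hx]
      rw [if_neg]
      intro heq
      refine hk (t / n, ⟨t % n, Nat.mod_lt t hn⟩) ?_
      show (σ ^ (t / n * n + t % n)) ⟨t % n, Nat.mod_lt t hn⟩ = k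
      rw [Nat.div_add_mod']
      exact heq
    have hxx := h x (fun _ _ => 0) hdyn (fun _ _ => rfl) hy
    have := congrFun (congrFun hxx 0) k
    simp [hx] at this
  · intro hs x x' hx hx' hy
    have key : ∀ (z : ℕ → Fin n → ℝ), (∀ t i, z (t + 1) i = z t (σ i)) →
        ∀ t i, z t i = z 0 ((σ ^ t) i) := by
      intro z hz t
      induction t with
      | zero => intro i; simp
      | succ t ih => intro i; rw [hz t i, ih (σ i), pow_succ]; rfl
    have h0 : ∀ i, x 0 i = x' 0 i := by
      intro i
      obtain ⟨⟨a, j⟩, hij⟩ := hs i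
      simp only at hij
      have hm : (a * n + (j : ℕ)) % n = (j : ℕ) := by
        rw [Nat.add_comm, Nat.add_mul_mod_self_right, Nat.mod_eq_of_lt j.isLt]
      have hfin : (⟨(a * n + (j : ℕ)) % n, Nat.mod_lt _ hn⟩ : Fin n) = j := by
        ext; exact hm
      have := hy (a * n + (j : ℕ))
      rw [key x hx, key x' hx', hfin, hij] at this
      exact this
    funext t i
    rw [key x hx, key x' hx', h0]
end

section
/- Let α ∈ (0, 2π) and let x : ℕ → ℝ² evolve by rotation through angle α: x(t+1) = R(α) x(t), where R(α) is the counterclockwise rotation matrix. Define y(t) = x(t)₁ if t is even and y(t) = x(t)₂ if t is odd (0-indexed alternation of coordinates). If there exist p, q ∈ ℕ with (2p+1)α ≡ 2qα (mod 2π), then x(0) is uniquely determined by y. -/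
open Matrix

lemma rot_pow (α : ℝ) (t : ℕ) :
    (!![Real.cos α, -Real.sin α; Real.sin α, Real.cos α]) ^ t =
      !![Real.cos (t*α), -Real.sin (t*α); Real.sin (t*α), Real.cos (t*α)] := by
  induction t with
  | zero => simp [Matrix.one_fin_two]
  | succ n ih =>
    rw [pow_succ, ih]
    ext i j
    fin_cases i <;> fin_cases j <;>
      simp [Matrix.mul_apply, Fin.sum_univ_two, Nat.cast_succ, add_mul, one_mul,
        Real.cos_add, Real.sin_add] <;> ring

theorem stmt9 (α : ℝ) (h0 : 0 < α) (h2 : α < 2 * Real.pi)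
    (hres : ∃ p q : ℕ, ∃ k : ℤ,
      (2 * (p : ℝ) + 1) * α = 2 * (q : ℝ) * α + 2 * Real.pi * (k : ℝ)) :
    Function.Injective (fun x₀ : Fin 2 → ℝ => fun t : ℕ =>
      ((!![Real.cos α, -Real.sin α; Real.sin α, Real.cos α] ^ t) *ᵥ x₀)
        ⟨t % 2, Nat.mod_lt t (by norm_num)⟩) := by
  obtain ⟨p, q, k, hk⟩ := hres
  set m : ℤ := 2 * (p : ℤ) + 1 - 2 * q with hm
  have hmα : (m : ℝ) * α = 2 * Real.pi * k := by
    push_cast [hm]; linarith [hk]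
  have hmodd : Odd m := ⟨(p : ℤ) - q, by ring⟩
  set t₀ : ℕ := m.natAbs with ht₀
  have ht₀odd : t₀ % 2 = 1 := Nat.odd_iff.mp (Int.natAbs_odd.mpr hmodd)
  -- (t₀ : ℝ) * α = 2π * k' for some integer k'
  have hta : ∃ k' : ℤ, (t₀ : ℝ) * α = 2 * Real.pi * k' := by
    rcases le_or_gt 0 m with hms | hms
    · exact ⟨k, by rw [ht₀, Nat.cast_natAbs]; rw [abs_of_nonneg (by exact_mod_cast hms)]; exact hmα⟩
    · refine ⟨-k, ?_⟩
      rw [ht₀, Nat.cast_natAbs, abs_of_neg (by exact_mod_cast hms)]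
      push_cast
      linarith [hmα]
  obtain ⟨k', hk'⟩ := hta
  have hcos : Real.cos ((t₀ : ℝ) * α) = 1 := by
    rw [hk']
    have : (2 : ℝ) * Real.pi * k' = (k' : ℝ) * (2 * Real.pi) := by ring
    rw [this, Real.cos_int_mul_two_pi]
  have hsin : Real.sin ((t₀ : ℝ) * α) = 0 := by
    nlinarith [Real.sin_sq_add_cos_sq ((t₀ : ℝ) * α), hcos]
  intro u v h
  have h0 := congrFun h 0
  have ht := congrFun h t₀
  simp only [pow_zero, Matrix.one_mulVec] at h0
  simp only [rot_pow] at ht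
  funext i
  fin_cases i
  · simpa using h0
  · have : (⟨t₀ % 2, Nat.mod_lt t₀ (by norm_num)⟩ : Fin 2) = 1 := by
      ext; simp [ht₀odd]
    rw [this] at ht
    simpa [Matrix.mulVec, dotProduct, Fin.sum_univ_two, hcos, hsin] using ht
end

section
/- Let G be a subgroup of GL(n, ℝ), G ∈ G, and suppose there exists G' ∈ G such that for every j ∈ Fin n there exists i ∈ ℕ with G^(i*n+j) = G'. If x evolves by x(t+1) = G x(t) and y(t) = (x(t)) (t mod n), then x(0) is uniquely determined by y. -/
open Matrix

theorem stmt12 (n : ℕ) (hn : 0 < n) (G G' : GL (Fin n) ℝ)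
    (h : ∀ j : Fin n, ∃ i : ℕ, G ^ (i * n + (j : ℕ)) = G') :
    Function.Injective (fun x₀ : Fin n → ℝ => fun t : ℕ =>
      (((G : Matrix (Fin n) (Fin n) ℝ) ^ t) *ᵥ x₀) ⟨t % n, Nat.mod_lt t hn⟩) := by
  intro a b hab
  have key : (G' : Matrix (Fin n) (Fin n) ℝ) *ᵥ a = (G' : Matrix (Fin n) (Fin n) ℝ) *ᵥ b := by
    funext j
    obtain ⟨i, hi⟩ := h j
    have ht := congrFun hab (i * n + (j : ℕ))
    simp only at ht
    have hmod : (i * n + (j : ℕ)) % n = (j : ℕ) := by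
      simp [Nat.add_mod, Nat.mul_mod_left, Nat.mul_mod_right, Nat.mod_eq_of_lt j.isLt]
    have hG : ((G : Matrix (Fin n) (Fin n) ℝ)) ^ (i * n + (j : ℕ)) = (G' : Matrix (Fin n) (Fin n) ℝ) := by
      rw [← hi]; push_cast [Units.val_pow_eq_pow_val]; simp
    rw [hG] at ht
    convert ht using 2 <;> exact (Fin.ext (by simp [hmod])).symm
  have := congrArg (fun v => (G'⁻¹ : Matrix (Fin n) (Fin n) ℝ) *ᵥ v) key
  simpa [mulVec_mulVec, ← Matrix.coe_units_inv] using this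
end
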